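/- Let G = GL_{2m}(ℂ) with m odd, t = diag((+1)^m, (−1)^m) ∈ G, and let λ = (λ_1,…,λ_1, λ_{m+1},…,λ_{m+1}) be a dominant weight with the first m entries equal to λ_1 and the last m entries equal to λ_{m+1}, where λ_1 ≥ λ_{m+1} and λ_1, λ_{m+1} have opposite parity. Then the character of the irreducible representation V(λ) of GL_{2m}(ℂ) vanishes at t: ch(t, V(λ)) = 0. -/

import Mathlib

/-!
The scalar matrix `-1` is central in `GL_{2m}(ℂ)`, so by Schur's lemma it acts on `V(λ)` by the
scalar through which it acts on the highest weight vector, `(-1)^{m(λ₁ + λ_{m+1})} = -1`.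
Hence `π(-t) = -π(t)`. On the other hand, reversing the order of the basis exchanges the two
halves of `t`, so `t` is conjugate to `-t` and the two traces agree; thus `ch(t) = -ch(t) = 0`.
-/

open Matrix

def diagUnits (N : ℕ) (d : Fin N → ℂˣ) : GL (Fin N) ℂ :=
  ⟨Matrix.diagonal (fun i => (d i : ℂ)),
   Matrix.diagonal (fun i => ((d i)⁻¹ : ℂˣ)),
   by
     rw [Matrix.diagonal_mul_diagonal]
     simp,
   by
     rw [Matrix.diagonal_mul_diagonal]
     simp⟩

namespace Representation

variable {k G V : Type*} [CommRing k] [Group G] [AddCommGroup V] [Module k V]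
  (π : Representation k G V)

theorem trace_eq_of_isConj {g h : G} (hgh : IsConj g h) :
    LinearMap.trace k V (π g) = LinearMap.trace k V (π h) := by
  obtain ⟨c, rfl⟩ := isConj_iff.mp hgh
  rw [π.map_mul, π.map_mul, LinearMap.trace_mul_comm, ← mul_assoc, ← π.map_mul, inv_mul_cancel,
    π.map_one, one_mul]

theorem apply_eq_smul_of_mem_center
    (hirr : ∀ U : Submodule k V, (∀ g : G, ∀ x ∈ U, π g x ∈ U) → U = ⊥ ∨ U = ⊤)
    {z : G} (hz : z ∈ Subgroup.center G) {w : V} (hw0 : w ≠ 0) {a : k} (hw : π z w = a • w)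
    (v : V) : π z v = a • v := by
  have hinv : ∀ g : G, ∀ x ∈ Module.End.eigenspace (π z) a,
      π g x ∈ Module.End.eigenspace (π z) a := by
    intro g x hx
    rw [Module.End.mem_eigenspace_iff] at hx ⊢
    rw [← Module.End.mul_apply, ← π.map_mul, ← Subgroup.mem_center_iff.mp hz, π.map_mul,
      Module.End.mul_apply, hx, map_smul]
  rcases hirr _ hinv with hbot | htop
  · have hw' : w ∈ Module.End.eigenspace (π z) a := Module.End.mem_eigenspace_iff.mpr hw
    exact absurd (by simpa [hbot] using hw') hw0
  · exact Module.End.mem_eigenspace_iff.mp (htop ▸ Submodule.mem_top)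

end Representation

theorem Units.neg_one_mem_center (R : Type*) [Ring R] : (-1 : Rˣ) ∈ Subgroup.center Rˣ :=
  Subgroup.mem_center_iff.mpr fun g => by simp

@[simp]
theorem val_diagUnits (N : ℕ) (d : Fin N → ℂˣ) :
    (diagUnits N d : Matrix (Fin N) (Fin N) ℂ) = diagonal fun i => (d i : ℂ) :=
  rfl

theorem diagUnits_neg (N : ℕ) (d : Fin N → ℂˣ) : diagUnits N (-d) = -diagUnits N d := by
  ext : 1
  simp

theorem isConj_diagUnits_comp_perm (N : ℕ) (d : Fin N → ℂˣ) (σ : Equiv.Perm (Fin N)) :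
    IsConj (diagUnits N d) (diagUnits N (d ∘ σ)) := by
  refine isConj_iff.mpr ⟨permMatrixHom.toHomUnits σ⁻¹, Units.ext ?_⟩
  rw [← map_inv, inv_inv]
  simp only [Units.val_mul, MonoidHom.coe_toHomUnits, permMatrixHom_apply, inv_inv,
    val_diagUnits, PEquiv.toMatrix_toPEquiv_mul, PEquiv.mul_toMatrix_toPEquiv]
  rw [submatrix_submatrix, Equiv.Perm.inv_def, Equiv.symm_symm]
  exact submatrix_diagonal_equiv _ σ

theorem isConj_diagUnits_ite_neg (m : ℕ) :
    IsConj (diagUnits (2 * m) fun i => if (i : ℕ) < m then 1 else -1)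
      (-diagUnits (2 * m) fun i => if (i : ℕ) < m then 1 else -1) := by
  rw [← diagUnits_neg]
  convert isConj_diagUnits_comp_perm _ _ Fin.revPerm using 2
  ext i : 1
  simp only [Pi.neg_apply, Function.comp_apply, Fin.revPerm_apply, Fin.val_rev]
  have := i.isLt
  split_ifs <;> first | omega | simp

theorem apply_neg_one_of_highestWeight {n : ℕ} {V : Type*} [AddCommGroup V] [Module ℂ V]
    (π : Representation ℂ (GL (Fin n) ℂ) V) (wt : Fin n → ℤ) {w : V}
    (hhw : ∀ g : GL (Fin n) ℂ,
      (∀ i j : Fin n, (j : ℕ) < (i : ℕ) → (g : Matrix (Fin n) (Fin n) ℂ) i j = 0) →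
      π g w = (∏ i, ((g : Matrix (Fin n) (Fin n) ℂ) i i) ^ wt i) • w) :
    π (-1) w = (∏ i, (-1 : ℂ) ^ wt i) • w := by
  refine (hhw _ fun i j hji => ?_).trans (by simp)
  simp [one_apply_ne (Fin.ne_of_gt hji)]

theorem prod_neg_one_zpow_ite_lt {m : ℕ} (hm : Odd m) {l1 l2 : ℤ} (hpar : Odd (l1 - l2)) :
    ∏ i : Fin (2 * m), (-1 : ℂ) ^ (if (i : ℕ) < m then l1 else l2) = -1 := by
  have hcard : (Finset.univ.filter fun i : Fin (2 * m) => (i : ℕ) < m).card = m := by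
    rw [Fin.card_filter_val_lt]; omega
  have hcard' : (Finset.univ.filter fun i : Fin (2 * m) => ¬ (i : ℕ) < m).card = m := by
    have := Finset.card_filter_add_card_filter_not (s := Finset.univ) fun i : Fin (2 * m) =>
      (i : ℕ) < m
    rw [hcard, Finset.card_univ, Fintype.card_fin] at this
    omega
  have hsum : Odd (l1 + l2) := by
    rw [show l1 + l2 = l1 - l2 + 2 * l2 by ring]
    exact hpar.add_even (even_two_mul l2)
  rw [Finset.prod_apply_ite, Finset.prod_const, Finset.prod_const, hcard, hcard', ← mul_pow,
    ← zpow_add₀ (by norm_num), hsum.neg_one_zpow, hm.neg_one_pow]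

theorem character_vanishes_GL2m_general
    (m : ℕ) (hm : Odd m)
    (l1 l2 : ℤ) (hpar : Odd (l1 - l2))
    (V : Type) [AddCommGroup V] [Module ℂ V]
    (π : Representation ℂ (GL (Fin (2 * m)) ℂ) V)
    (hirr : ∀ U : Submodule ℂ V,
      (∀ g : GL (Fin (2 * m)) ℂ, ∀ x ∈ U, π g x ∈ U) → U = ⊥ ∨ U = ⊤)
    (w : V) (hw0 : w ≠ 0)
    (hhw : ∀ g : GL (Fin (2 * m)) ℂ,
      (∀ i j : Fin (2 * m), (j : ℕ) < (i : ℕ) → (g : Matrix (Fin (2 * m)) (Fin (2 * m)) ℂ) i j = 0) →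
      π g w = (∏ i : Fin (2 * m),
        ((g : Matrix (Fin (2 * m)) (Fin (2 * m)) ℂ) i i) ^
          (if (i : ℕ) < m then l1 else l2)) • w) :
    LinearMap.trace ℂ V
      (π (diagUnits (2 * m) (fun i => if (i : ℕ) < m then 1 else -1))) = 0 := by
  set t := diagUnits (2 * m) fun i => if (i : ℕ) < m then 1 else -1
  have hw : π (-1) w = (-1 : ℂ) • w := by
    rw [apply_neg_one_of_highestWeight π _ hhw, prod_neg_one_zpow_ite_lt hm hpar]
  have hcentral : π (-1) = -1 := LinearMap.ext fun v => by
    simpa using π.apply_eq_smul_of_mem_center hirr (Units.neg_one_mem_center _) hw0 hw v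
  have htr : LinearMap.trace ℂ V (π t) = -LinearMap.trace ℂ V (π t) := calc
    LinearMap.trace ℂ V (π t) = LinearMap.trace ℂ V (π (-1 * t)) := by
      rw [neg_one_mul]
      exact π.trace_eq_of_isConj (isConj_diagUnits_ite_neg m)
    _ = -LinearMap.trace ℂ V (π t) := by rw [π.map_mul, hcentral, neg_one_mul, map_neg]
  exact self_eq_neg.mp htr

/-- **Example 3.2.**  Let `G = GL_{2m}(ℂ)` with `m` odd,
`t = diag((+1)^m, (−1)^m)`, and let `λ = (λ₁,…,λ₁,λ_{m+1},…,λ_{m+1})` be a dominant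
weight with first `m` entries `λ₁` and last `m` entries `λ_{m+1}`, where `λ₁ ≥ λ_{m+1}`
and `λ₁ − λ_{m+1}` is odd.  Then `ch(t, V(λ)) = 0`, for `V(λ)` the irreducible
representation of highest weight `λ` (modelled as an irreducible finite-dimensional
representation with a highest weight vector `w`, i.e. an eigenvector of the Borel of
upper triangular matrices with eigencharacter `g ↦ ∏ᵢ gᵢᵢ^{λᵢ}`). -/
theorem character_vanishes_GL2m
    (m : ℕ) (hm : Odd m) (hm0 : 0 < m)
    (l1 l2 : ℤ) (hdom : l2 ≤ l1) (hpar : Odd (l1 - l2))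
    (V : Type) [AddCommGroup V] [Module ℂ V] [FiniteDimensional ℂ V]
    (π : Representation ℂ (GL (Fin (2 * m)) ℂ) V)
    (hirr : ∀ U : Submodule ℂ V,
      (∀ g : GL (Fin (2 * m)) ℂ, ∀ x ∈ U, π g x ∈ U) → U = ⊥ ∨ U = ⊤)
    (w : V) (hw0 : w ≠ 0)
    (hhw : ∀ g : GL (Fin (2 * m)) ℂ,
      (∀ i j : Fin (2 * m), (j : ℕ) < (i : ℕ) → (g : Matrix (Fin (2 * m)) (Fin (2 * m)) ℂ) i j = 0) →
      π g w = (∏ i : Fin (2 * m),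
        ((g : Matrix (Fin (2 * m)) (Fin (2 * m)) ℂ) i i) ^
          (if (i : ℕ) < m then l1 else l2)) • w) :
    LinearMap.trace ℂ V
      (π (diagUnits (2 * m) (fun i => if (i : ℕ) < m then 1 else -1))) = 0 :=
  character_vanishes_GL2m_general m hm l1 l2 hpar V π hirr w hw0 hhw
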